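/- Retraction stays near projection (consequence for Riemannian consensus): assume for a retraction R on M the estimate ‖P_M(x+u) − R_x(P_{T_xM}(u))‖ ≤ M₁‖u‖² for all x ∈ M and u ∈ ℝ^{d×r}, and assume P_M is R/(R−δ̂)-Lipschitz on the δ̂-tube with single-step contraction factor ρ₂ = R(1−γ+γσ₂)/(R−δ̂) + 8M₁γ²δ̂ < 1. Then the Riemannian gradient consensus iteration x_{i,k+1} = R_{x_{i,k}}(−γ P_{T_{x_{i,k}}M}(x_{i,k} − ∑_j W_{ij}x_{j,k})) satisfies ‖x_{k+1} − x̄_{k+1}‖ ≤ ρ₂‖x_k − x̄_k‖ whenever ‖x_k − x̄_k‖ ≤ δ̂ ≤ R/4. -/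

import Mathlib

/-!
Measure the spread of `x` around the old centre `x̄ = P(x̂)`. The Euclidean consensus step
`y = x - γ (x - W x)` acts on `y - x̂` as `(1 - γ) I + γ W`, which contracts mean-zero families
by `1 - γ + γ σ₂`, and it keeps every `yᵢ` in the `δ̂`-tube around `x̄`, where `P` is
`R / (R - δ̂)`-Lipschitz. The retraction differs from `P(y)` by `M₁ ‖u‖²` with
`‖u‖ ≤ 2 γ ‖x - x̂‖ ≤ 2 γ ‖x - x̄‖`, a quadratic term absorbed using `‖x - x̄‖ ≤ δ̂`.
Finally, recentring at the projection of the new mean does not increase the spread: by the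
parallel-axis identity `∑ ‖xᵢ - c‖² = ∑ ‖xᵢ - x̂‖² + n ‖x̂ - c‖²` only the distance from `c` to
the mean matters, and `P(x̂⁺)` is a nearest point of `M` to `x̂⁺`.
-/

open scoped RealInnerProductSpace

open scoped BigOperators

/-- Frobenius norm of a stacked family of vectors. -/
noncomputable def stackNorm {n N : ℕ} (z : Fin n → EuclideanSpace ℝ (Fin N)) : ℝ :=
  Real.sqrt (∑ i, ‖z i‖ ^ 2)

variable {n N : ℕ}

section StackNorm

lemma stackNorm_eq_norm_toLp (z : Fin n → EuclideanSpace ℝ (Fin N)) :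
    stackNorm z = ‖(WithLp.toLp 2 z : PiLp 2 fun _ : Fin n => EuclideanSpace ℝ (Fin N))‖ := by
  rw [PiLp.norm_eq_of_L2]; rfl

lemma stackNorm_nonneg (z : Fin n → EuclideanSpace ℝ (Fin N)) : 0 ≤ stackNorm z :=
  Real.sqrt_nonneg _

lemma norm_le_stackNorm (z : Fin n → EuclideanSpace ℝ (Fin N)) (i : Fin n) :
    ‖z i‖ ≤ stackNorm z := by
  rw [stackNorm_eq_norm_toLp]; exact PiLp.norm_apply_le (WithLp.toLp 2 z) i

lemma sq_stackNorm (z : Fin n → EuclideanSpace ℝ (Fin N)) :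
    stackNorm z ^ 2 = ∑ i, ‖z i‖ ^ 2 :=
  Real.sq_sqrt (by positivity)

lemma stackNorm_add_le (a b : Fin n → EuclideanSpace ℝ (Fin N)) :
    stackNorm (a + b) ≤ stackNorm a + stackNorm b := by
  simpa only [stackNorm_eq_norm_toLp, WithLp.toLp_add] using norm_add_le _ _

lemma stackNorm_sub_le (a b : Fin n → EuclideanSpace ℝ (Fin N)) :
    stackNorm (a - b) ≤ stackNorm a + stackNorm b := by
  simpa only [stackNorm_eq_norm_toLp, WithLp.toLp_sub] using norm_sub_le _ _

lemma stackNorm_sub_le_add (a b c : Fin n → EuclideanSpace ℝ (Fin N)) :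
    stackNorm (a - c) ≤ stackNorm (a - b) + stackNorm (b - c) := by
  simpa only [stackNorm_eq_norm_toLp, WithLp.toLp_sub] using
    norm_sub_le_norm_sub_add_norm_sub _ _ _

lemma stackNorm_smul (c : ℝ) (z : Fin n → EuclideanSpace ℝ (Fin N)) :
    stackNorm (c • z) = |c| * stackNorm z := by
  rw [stackNorm_eq_norm_toLp, stackNorm_eq_norm_toLp, WithLp.toLp_smul, norm_smul,
    Real.norm_eq_abs]

lemma stackNorm_le_mul_of_norm_le {c : ℝ} (hc : 0 ≤ c) {a b : Fin n → EuclideanSpace ℝ (Fin N)}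
    (h : ∀ i, ‖a i‖ ≤ c * ‖b i‖) : stackNorm a ≤ c * stackNorm b := by
  rw [stackNorm, stackNorm, ← Real.sqrt_sq hc, ← Real.sqrt_mul (sq_nonneg c), Finset.mul_sum]
  gcongr with i
  rw [← mul_pow]
  exact pow_le_pow_left₀ (norm_nonneg _) (h i) 2

lemma stackNorm_le_mul_sq_of_norm_le {c : ℝ} {a b : Fin n → EuclideanSpace ℝ (Fin N)}
    (h : ∀ i, ‖a i‖ ≤ c * ‖b i‖ ^ 2) : stackNorm a ≤ c * stackNorm b ^ 2 :=
  calc stackNorm a ≤ ∑ i, ‖a i‖ := by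
        rw [stackNorm, Real.sqrt_le_left (Finset.sum_nonneg fun i _ => norm_nonneg _)]
        exact Finset.sum_sq_le_sq_sum_of_nonneg fun i _ => norm_nonneg _
    _ ≤ ∑ i, c * ‖b i‖ ^ 2 := Finset.sum_le_sum fun i _ => h i
    _ = c * stackNorm b ^ 2 := by rw [sq_stackNorm, Finset.mul_sum]

end StackNorm

section Mean

variable {E : Type*}

/-- The Euclidean mean, `x̂` in the informal statement. -/
noncomputable def mean [AddCommGroup E] [Module ℝ E] (x : Fin n → E) : E :=
  (n : ℝ)⁻¹ • ∑ j, x j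

lemma sum_sub_mean [AddCommGroup E] [Module ℝ E] (hn : 0 < n) (x : Fin n → E) :
    ∑ i, (x i - mean x) = 0 := by
  rw [Finset.sum_sub_distrib, Finset.sum_const, Finset.card_univ, Fintype.card_fin,
    ← Nat.cast_smul_eq_nsmul ℝ, mean, smul_smul, mul_inv_cancel₀ (by positivity), one_smul,
    sub_self]

lemma sum_norm_sub_sq_eq [NormedAddCommGroup E] [InnerProductSpace ℝ E] (hn : 0 < n)
    (x : Fin n → E) (c : E) :
    ∑ i, ‖x i - c‖ ^ 2 = ∑ i, ‖x i - mean x‖ ^ 2 + n * ‖mean x - c‖ ^ 2 := by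
  have hcross : ∑ i, 2 * ⟪x i - mean x, mean x - c⟫ = 0 := by
    rw [← Finset.mul_sum, ← sum_inner, sum_sub_mean hn, inner_zero_left, mul_zero]
  calc ∑ i, ‖x i - c‖ ^ 2
      = ∑ i, (‖x i - mean x‖ ^ 2 + 2 * ⟪x i - mean x, mean x - c⟫ + ‖mean x - c‖ ^ 2) := by
        refine Finset.sum_congr rfl fun i _ => ?_
        rw [← norm_add_sq_real, sub_add_sub_cancel]
    _ = ∑ i, ‖x i - mean x‖ ^ 2 + n * ‖mean x - c‖ ^ 2 := by
        rw [Finset.sum_add_distrib, Finset.sum_add_distrib, hcross, add_zero, Finset.sum_const,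
          Finset.card_univ, Fintype.card_fin, nsmul_eq_mul]

end Mean

section Spread

variable {x : Fin n → EuclideanSpace ℝ (Fin N)}

lemma stackNorm_sub_le_of_norm_mean_sub_le (hn : 0 < n) {c c' : EuclideanSpace ℝ (Fin N)}
    (h : ‖mean x - c‖ ≤ ‖mean x - c'‖) :
    stackNorm (fun i => x i - c) ≤ stackNorm (fun i => x i - c') := by
  unfold stackNorm
  beta_reduce
  rw [sum_norm_sub_sq_eq hn x c, sum_norm_sub_sq_eq hn x c']
  gcongr

lemma stackNorm_sub_mean_le (hn : 0 < n) (c : EuclideanSpace ℝ (Fin N)) :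
    stackNorm (fun i => x i - mean x) ≤ stackNorm (fun i => x i - c) :=
  stackNorm_sub_le_of_norm_mean_sub_le hn (by simp)

lemma norm_mean_sub_le_stackNorm (hn : 0 < n) (c : EuclideanSpace ℝ (Fin N)) :
    ‖mean x - c‖ ≤ stackNorm (fun i => x i - c) := by
  rw [stackNorm, Real.le_sqrt (norm_nonneg _) (by positivity), sum_norm_sub_sq_eq hn]
  have h1 : (1 : ℝ) ≤ n := by exact_mod_cast hn
  nlinarith [sq_nonneg ‖mean x - c‖,
    Finset.sum_nonneg fun i (_ : i ∈ Finset.univ) => sq_nonneg ‖x i - mean x‖]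

lemma infDist_le_of_norm_sub_le {M : Set (EuclideanSpace ℝ (Fin N))} {a c} (hc : c ∈ M)
    {r : ℝ} (h : ‖a - c‖ ≤ r) : Metric.infDist a M ≤ r :=
  (Metric.infDist_le_dist_of_mem hc).trans (by rwa [dist_eq_norm])

lemma infDist_mean_le_two_mul (hn : 0 < n) {M : Set (EuclideanSpace ℝ (Fin N))}
    (hxM : ∀ i, x i ∈ M) (c : EuclideanSpace ℝ (Fin N)) :
    Metric.infDist (mean x) M ≤ 2 * stackNorm (fun i => x i - c) := by
  refine infDist_le_of_norm_sub_le (hxM ⟨0, hn⟩) ?_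
  calc ‖mean x - x ⟨0, hn⟩‖ ≤ ‖mean x - c‖ + ‖x ⟨0, hn⟩ - c‖ := by
        rw [norm_sub_rev (x _)]; exact norm_sub_le_norm_sub_add_norm_sub _ _ _
    _ ≤ 2 * stackNorm (fun i => x i - c) := by
        linarith [norm_mean_sub_le_stackNorm hn (x := x) c,
          norm_le_stackNorm (fun i => x i - c) ⟨0, hn⟩]

lemma stackNorm_sub_nearest_le (hn : 0 < n) {M : Set (EuclideanSpace ℝ (Fin N))} {p c}
    (hp : dist p (mean x) = Metric.infDist (mean x) M) (hc : c ∈ M) :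
    stackNorm (fun i => x i - p) ≤ stackNorm (fun i => x i - c) := by
  refine stackNorm_sub_le_of_norm_mean_sub_le hn ?_
  rw [norm_sub_rev, ← dist_eq_norm, hp, ← dist_eq_norm]
  exact Metric.infDist_le_dist_of_mem hc

end Spread

section Mix

variable {E : Type*} {W : Matrix (Fin n) (Fin n) ℝ}

def mix [AddCommGroup E] [Module ℝ E] (W : Matrix (Fin n) (Fin n) ℝ) (x : Fin n → E) :
    Fin n → E :=
  fun i => ∑ j, W i j • x j

lemma mix_sub_const [AddCommGroup E] [Module ℝ E] (hrow : ∀ i, ∑ j, W i j = 1)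
    (x : Fin n → E) (c : E) (i : Fin n) :
    mix W (fun j => x j - c) i = mix W x i - c := by
  simp only [mix, smul_sub, Finset.sum_sub_distrib, ← Finset.sum_smul, hrow i, one_smul]

lemma consensusStep_sub_const [AddCommGroup E] [Module ℝ E] (hrow : ∀ i, ∑ j, W i j = 1)
    (γ : ℝ) (x : Fin n → E) (c : E) (i : Fin n) :
    x i + -(γ • (x i - mix W x i)) - c = (1 - γ) • (x i - c) + γ • mix W (fun j => x j - c) i := by
  rw [mix_sub_const hrow]
  module

lemma norm_mix_le [SeminormedAddCommGroup E] [NormedSpace ℝ E] (hnn : ∀ i j, 0 ≤ W i j)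
    (hrow : ∀ i, ∑ j, W i j = 1) {x : Fin n → E} {r : ℝ} (hx : ∀ j, ‖x j‖ ≤ r) (i : Fin n) :
    ‖mix W x i‖ ≤ r :=
  calc ‖mix W x i‖ ≤ ∑ j, ‖W i j • x j‖ := norm_sum_le _ _
    _ ≤ ∑ j, W i j * r := Finset.sum_le_sum fun j _ => by
        rw [norm_smul, Real.norm_of_nonneg (hnn i j)]
        exact mul_le_mul_of_nonneg_left (hx j) (hnn i j)
    _ = r := by rw [← Finset.sum_mul, hrow i, one_mul]

end Mix

section Consensus

/-- `σ₂` plays the role of the second largest singular value of `W`. -/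
def MixContracts (N : ℕ) (W : Matrix (Fin n) (Fin n) ℝ) (σ₂ : ℝ) : Prop :=
  ∀ z : Fin n → EuclideanSpace ℝ (Fin N), ∑ i, z i = 0 → stackNorm (mix W z) ≤ σ₂ * stackNorm z

variable {W : Matrix (Fin n) (Fin n) ℝ} {σ₂ γ : ℝ}

lemma stackNorm_gossip_le (hσ : MixContracts N W σ₂) (hγ0 : 0 ≤ γ) (hγ1 : γ ≤ 1)
    {z : Fin n → EuclideanSpace ℝ (Fin N)} (hz : ∑ i, z i = 0) :
    stackNorm ((1 - γ) • z + γ • mix W z) ≤ (1 - γ + γ * σ₂) * stackNorm z :=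
  calc stackNorm ((1 - γ) • z + γ • mix W z)
      ≤ stackNorm ((1 - γ) • z) + stackNorm (γ • mix W z) := stackNorm_add_le _ _
    _ ≤ (1 - γ) * stackNorm z + γ * (σ₂ * stackNorm z) := by
        rw [stackNorm_smul, stackNorm_smul, abs_of_nonneg (sub_nonneg.2 hγ1), abs_of_nonneg hγ0]
        gcongr
        exact hσ z hz
    _ = (1 - γ + γ * σ₂) * stackNorm z := by ring

lemma stackNorm_sub_mix_le (hn : 0 < n) (hσ : MixContracts N W σ₂)
    (hrow : ∀ i, ∑ j, W i j = 1) (x : Fin n → EuclideanSpace ℝ (Fin N)) :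
    stackNorm (fun i => x i - mix W x i) ≤ (1 + σ₂) * stackNorm (fun i => x i - mean x) := by
  set z : Fin n → EuclideanSpace ℝ (Fin N) := fun i => x i - mean x
  have hxz : (fun i => x i - mix W x i) = z - mix W z := by
    funext i
    simp only [Pi.sub_apply, z, mix_sub_const hrow]
    abel
  calc stackNorm (fun i => x i - mix W x i) ≤ stackNorm z + stackNorm (mix W z) :=
        hxz ▸ stackNorm_sub_le _ _
    _ ≤ stackNorm z + σ₂ * stackNorm z := by gcongr; exact hσ z (sum_sub_mean hn x)
    _ = (1 + σ₂) * stackNorm z := by ring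

end Consensus

section Step

variable {W : Matrix (Fin n) (Fin n) ℝ} {σ₂ γ : ℝ} {M : Set (EuclideanSpace ℝ (Fin N))}
  {P : EuclideanSpace ℝ (Fin N) → EuclideanSpace ℝ (Fin N)} {x : Fin n → EuclideanSpace ℝ (Fin N)}

lemma stackNorm_consensusDir_le (hn : 0 < n) (hσ : MixContracts N W σ₂)
    (hrow : ∀ i, ∑ j, W i j = 1) (hγ0 : 0 ≤ γ) :
    stackNorm (fun i => -(γ • (x i - mix W x i)))
      ≤ γ * ((1 + σ₂) * stackNorm (fun i => x i - mean x)) := by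
  have hu : (fun i => -(γ • (x i - mix W x i))) = (-γ) • fun i => x i - mix W x i := by
    funext i; simp only [Pi.smul_apply, neg_smul]
  rw [hu, stackNorm_smul, abs_neg, abs_of_nonneg hγ0]
  gcongr
  exact stackNorm_sub_mix_le hn hσ hrow x

lemma stackNorm_proj_consensusStep_sub_le (hn : 0 < n) (hσ : MixContracts N W σ₂)
    (hnn : ∀ i j, 0 ≤ W i j) (hrow : ∀ i, ∑ j, W i j = 1) (hγ0 : 0 ≤ γ) (hγ1 : γ ≤ 1)
    {δ L : ℝ} (hL : 0 ≤ L)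
    (hlip : ∀ a b, Metric.infDist a M ≤ δ → Metric.infDist b M ≤ δ → ‖P a - P b‖ ≤ L * ‖a - b‖)
    {c : EuclideanSpace ℝ (Fin N)} (hc : c ∈ M) (hx : ∀ i, ‖x i - c‖ ≤ δ)
    (hmean : ‖mean x - c‖ ≤ δ) :
    stackNorm (fun i => P (x i + -(γ • (x i - mix W x i))) - P (mean x))
      ≤ L * (1 - γ + γ * σ₂) * stackNorm (fun i => x i - mean x) := by
  have hstep : ∀ i, ‖x i + -(γ • (x i - mix W x i)) - c‖ ≤ δ := fun i => by
    rw [consensusStep_sub_const hrow]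
    calc ‖(1 - γ) • (x i - c) + γ • mix W (fun j => x j - c) i‖
        ≤ ‖(1 - γ) • (x i - c)‖ + ‖γ • mix W (fun j => x j - c) i‖ := norm_add_le _ _
      _ ≤ (1 - γ) * δ + γ * δ := by
          rw [norm_smul, norm_smul, Real.norm_of_nonneg (sub_nonneg.2 hγ1),
            Real.norm_of_nonneg hγ0]
          gcongr
          exacts [hx i, norm_mix_le hnn hrow hx i]
      _ = δ := by ring
  have hgossip : stackNorm (fun i => x i + -(γ • (x i - mix W x i)) - mean x)
      ≤ (1 - γ + γ * σ₂) * stackNorm (fun i => x i - mean x) := by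
    convert stackNorm_gossip_le hσ hγ0 hγ1 (sum_sub_mean hn x) using 2
    funext i
    exact consensusStep_sub_const hrow γ x (mean x) i
  calc stackNorm (fun i => P (x i + -(γ • (x i - mix W x i))) - P (mean x))
      ≤ L * stackNorm (fun i => x i + -(γ • (x i - mix W x i)) - mean x) :=
        stackNorm_le_mul_of_norm_le hL fun i =>
          hlip _ _ (infDist_le_of_norm_sub_le hc (hstep i)) (infDist_le_of_norm_sub_le hc hmean)
    _ ≤ L * ((1 - γ + γ * σ₂) * stackNorm (fun i => x i - mean x)) := by gcongr
    _ = L * (1 - γ + γ * σ₂) * stackNorm (fun i => x i - mean x) := by ring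

lemma stackNorm_retrStep_sub_le (hn : 0 < n) (hσ : MixContracts N W σ₂)
    (hσ₂0 : 0 ≤ σ₂) (hσ₂1 : σ₂ ≤ 1) (hnn : ∀ i j, 0 ≤ W i j) (hrow : ∀ i, ∑ j, W i j = 1)
    (hγ0 : 0 ≤ γ) (hγ1 : γ ≤ 1)
    {F : EuclideanSpace ℝ (Fin N) → EuclideanSpace ℝ (Fin N) → EuclideanSpace ℝ (Fin N)}
    {M₁ : ℝ} (hM₁0 : 0 ≤ M₁) (hF : ∀ z ∈ M, ∀ u, ‖P (z + u) - F z u‖ ≤ M₁ * ‖u‖ ^ 2)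
    {δ L : ℝ} (hL : 0 ≤ L)
    (hlip : ∀ a b, Metric.infDist a M ≤ δ → Metric.infDist b M ≤ δ → ‖P a - P b‖ ≤ L * ‖a - b‖)
    (hxM : ∀ i, x i ∈ M) (hx : stackNorm (fun i => x i - P (mean x)) ≤ δ)
    (hcM : P (mean x) ∈ M) :
    stackNorm (fun i => F (x i) (-(γ • (x i - mix W x i))) - P (mean x))
      ≤ (L * (1 - γ + γ * σ₂) + 4 * M₁ * γ ^ 2 * δ) * stackNorm (fun i => x i - P (mean x)) := by
  set c := P (mean x)
  set u : Fin n → EuclideanSpace ℝ (Fin N) := fun i => -(γ • (x i - mix W x i))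
  set d := stackNorm (fun i => x i - c)
  set e := stackNorm (fun i => x i - mean x)
  have hlin := stackNorm_proj_consensusStep_sub_le hn hσ hnn hrow hγ0 hγ1 hL hlip hcM
    (fun i => (norm_le_stackNorm (fun i => x i - c) i).trans hx)
    ((norm_mean_sub_le_stackNorm hn c).trans hx)
  have he0 : 0 ≤ e := stackNorm_nonneg _
  have hretr : stackNorm (fun i => F (x i) (u i) - P (x i + u i))
      ≤ M₁ * (γ * ((1 + σ₂) * e)) ^ 2 :=
    calc _ ≤ M₁ * stackNorm u ^ 2 :=
          stackNorm_le_mul_sq_of_norm_le fun i => by rw [norm_sub_rev]; exact hF _ (hxM i) _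
      _ ≤ M₁ * (γ * ((1 + σ₂) * e)) ^ 2 := by
          have := stackNorm_nonneg u
          gcongr
          exact stackNorm_consensusDir_le hn hσ hrow hγ0
  calc stackNorm (fun i => F (x i) (u i) - c)
      ≤ stackNorm (fun i => F (x i) (u i) - P (x i + u i))
        + stackNorm (fun i => P (x i + u i) - c) :=
        stackNorm_sub_le_add _ (fun i => P (x i + u i)) (fun _ => c)
    _ ≤ M₁ * (γ * ((1 + σ₂) * e)) ^ 2 + L * (1 - γ + γ * σ₂) * e := add_le_add hretr hlin
    _ ≤ M₁ * (γ * (2 * d)) ^ 2 + L * (1 - γ + γ * σ₂) * d := by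
        have : 0 ≤ 1 - γ + γ * σ₂ := by nlinarith
        have hed : e ≤ d := stackNorm_sub_mean_le hn c
        gcongr
        linarith
    _ = (L * (1 - γ + γ * σ₂) + 4 * M₁ * γ ^ 2 * d) * d := by ring
    _ ≤ (L * (1 - γ + γ * σ₂) + 4 * M₁ * γ ^ 2 * δ) * d := by
        have : 0 ≤ d := stackNorm_nonneg _
        gcongr

end Step

theorem stmt19_general {n N : ℕ} (hn : 0 < n)
    (M : Set (EuclideanSpace ℝ (Fin N)))
    (R : ℝ)
    (P : EuclideanSpace ℝ (Fin N) → EuclideanSpace ℝ (Fin N))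
    (hP : ∀ z, Metric.infDist z M < R →
      P z ∈ M ∧ dist (P z) z = Metric.infDist z M ∧
        ∀ y ∈ M, dist y z = Metric.infDist z M → y = P z)
    -- retraction and tangent-space projections
    (Retr : EuclideanSpace ℝ (Fin N) → EuclideanSpace ℝ (Fin N) → EuclideanSpace ℝ (Fin N))
    (Pt : EuclideanSpace ℝ (Fin N) →
      (EuclideanSpace ℝ (Fin N) →ₗ[ℝ] EuclideanSpace ℝ (Fin N)))
    (M₁ : ℝ) (hM₁0 : 0 ≤ M₁)
    (hM₁ : ∀ z ∈ M, ∀ u, ‖P (z + u) - Retr z (Pt z u)‖ ≤ M₁ * ‖u‖ ^ 2)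
    (W : Matrix (Fin n) (Fin n) ℝ) (hnn : ∀ i j, 0 ≤ W i j)
    (hrow : ∀ i, ∑ j, W i j = 1)
    (σ₂ : ℝ) (hσ₂0 : 0 ≤ σ₂) (hσ₂1 : σ₂ < 1)
    (hσ : ∀ z : Fin n → EuclideanSpace ℝ (Fin N), (∑ i, z i = 0) →
      stackNorm (fun i => ∑ j, W i j • z j) ≤ σ₂ * stackNorm z)
    (γ : ℝ) (hγ0 : 0 < γ) (hγ1 : γ ≤ 1)
    (δhat : ℝ) (hδ0 : 0 < δhat) (hδR : δhat ≤ R / 4)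
    -- P is R/(R-δ̂)-Lipschitz on the δ̂-tube
    (hlip : ∀ a b, Metric.infDist a M ≤ δhat → Metric.infDist b M ≤ δhat →
      ‖P a - P b‖ ≤ (R / (R - δhat)) * ‖a - b‖)
    (hρ₂ : R * (1 - γ + γ * σ₂) / (R - δhat) + 8 * M₁ * γ ^ 2 * δhat < 1)
    (x : Fin n → EuclideanSpace ℝ (Fin N)) (hxM : ∀ i, x i ∈ M)
    (hclose : stackNorm (fun i => x i - P ((n : ℝ)⁻¹ • ∑ j, x j)) ≤ δhat)
    (xnext : Fin n → EuclideanSpace ℝ (Fin N))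
    (hnext : ∀ i, xnext i = Retr (x i) (Pt (x i) (-(γ • (x i - ∑ j, W i j • x j))))) :
    stackNorm (fun i => xnext i - P ((n : ℝ)⁻¹ • ∑ j, xnext j)) ≤
      (R * (1 - γ + γ * σ₂) / (R - δhat) + 8 * M₁ * γ ^ 2 * δhat) *
        stackNorm (fun i => x i - P ((n : ℝ)⁻¹ • ∑ j, x j)) := by
  have hRδ : 0 < R - δhat := by linarith
  change stackNorm (fun i => xnext i - P (mean xnext)) ≤ _ * stackNorm (fun i => x i - P (mean x))
  change stackNorm (fun i => x i - P (mean x)) ≤ δhat at hclose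
  set c := P (mean x)
  have hcM : c ∈ M := (hP _ ((infDist_mean_le_two_mul hn hxM c).trans_lt (by linarith))).1
  have hstep : stackNorm (fun i => xnext i - c)
      ≤ (R * (1 - γ + γ * σ₂) / (R - δhat) + 8 * M₁ * γ ^ 2 * δhat)
        * stackNorm (fun i => x i - c) := by
    rw [funext hnext, mul_div_right_comm]
    refine (stackNorm_retrStep_sub_le (F := fun z u => Retr z (Pt z u)) hn hσ hσ₂0 hσ₂1.le hnn
      hrow hγ0.le hγ1 hM₁0 hM₁ (div_nonneg (by linarith) hRδ.le) hlip hxM hclose hcM).trans ?_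
    have := stackNorm_nonneg (fun i => x i - c)
    have := mul_nonneg (mul_nonneg hM₁0 (sq_nonneg γ)) hδ0.le
    gcongr
    linarith
  have hnext_close : stackNorm (fun i => xnext i - c) < R := by
    nlinarith [stackNorm_nonneg (fun i => x i - c)]
  obtain ⟨-, hdist, -⟩ := hP (mean xnext)
    ((infDist_le_of_norm_sub_le hcM (norm_mean_sub_le_stackNorm hn c)).trans_lt hnext_close)
  exact (stackNorm_sub_nearest_le hn hdist hcM).trans hstep

/-- retraction stays near projection: Riemannian consensus contraction:
assume for a retraction `Retr` on `M` the estimate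
`‖P(x+u) - Retr_x(P_{T_xM} u)‖ ≤ M₁ ‖u‖²` for all `x ∈ M`, `u`, and assume `P` is
`R/(R-δ̂)`-Lipschitz on the `δ̂`-tube, with single-step contraction factor
`ρ₂ = R(1-γ+γσ₂)/(R-δ̂) + 8 M₁ γ² δ̂ < 1`. Then the Riemannian gradient consensus
iteration `x_i⁺ = Retr_{x_i}(-γ P_{T_{x_i}M}(x_i - ∑_j W_{ij} x_j))` satisfies
`‖x⁺ - x̄⁺‖ ≤ ρ₂ ‖x - x̄‖` whenever `‖x - x̄‖ ≤ δ̂ ≤ R/4`. -/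
theorem stmt19 {n N : ℕ} (hn : 0 < n)
    (M : Set (EuclideanSpace ℝ (Fin N))) (hMcompact : IsCompact M) (hMne : M.Nonempty)
    (R : ℝ) (hR : 0 < R)
    (P : EuclideanSpace ℝ (Fin N) → EuclideanSpace ℝ (Fin N))
    (hP : ∀ z, Metric.infDist z M < R →
      P z ∈ M ∧ dist (P z) z = Metric.infDist z M ∧
        ∀ y ∈ M, dist y z = Metric.infDist z M → y = P z)
    -- retraction and tangent-space projections
    (Retr : EuclideanSpace ℝ (Fin N) → EuclideanSpace ℝ (Fin N) → EuclideanSpace ℝ (Fin N))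
    (Pt : EuclideanSpace ℝ (Fin N) →
      (EuclideanSpace ℝ (Fin N) →ₗ[ℝ] EuclideanSpace ℝ (Fin N)))
    (hRetrM : ∀ z ∈ M, ∀ u, Retr z u ∈ M)
    (M₁ : ℝ) (hM₁0 : 0 ≤ M₁)
    (hM₁ : ∀ z ∈ M, ∀ u, ‖P (z + u) - Retr z (Pt z u)‖ ≤ M₁ * ‖u‖ ^ 2)
    (W : Matrix (Fin n) (Fin n) ℝ) (hsymm : W.IsSymm) (hnn : ∀ i j, 0 ≤ W i j)
    (hrow : ∀ i, ∑ j, W i j = 1)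
    (σ₂ : ℝ) (hσ₂0 : 0 ≤ σ₂) (hσ₂1 : σ₂ < 1)
    (hσ : ∀ z : Fin n → EuclideanSpace ℝ (Fin N), (∑ i, z i = 0) →
      stackNorm (fun i => ∑ j, W i j • z j) ≤ σ₂ * stackNorm z)
    (γ : ℝ) (hγ0 : 0 < γ) (hγ1 : γ ≤ 1)
    (δhat : ℝ) (hδ0 : 0 < δhat) (hδR : δhat ≤ R / 4)
    -- P is R/(R-δ̂)-Lipschitz on the δ̂-tube
    (hlip : ∀ a b, Metric.infDist a M ≤ δhat → Metric.infDist b M ≤ δhat →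
      ‖P a - P b‖ ≤ (R / (R - δhat)) * ‖a - b‖)
    (hρ₂ : R * (1 - γ + γ * σ₂) / (R - δhat) + 8 * M₁ * γ ^ 2 * δhat < 1)
    (x : Fin n → EuclideanSpace ℝ (Fin N)) (hxM : ∀ i, x i ∈ M)
    (hclose : stackNorm (fun i => x i - P ((n : ℝ)⁻¹ • ∑ j, x j)) ≤ δhat)
    (xnext : Fin n → EuclideanSpace ℝ (Fin N))
    (hnext : ∀ i, xnext i = Retr (x i) (Pt (x i) (-(γ • (x i - ∑ j, W i j • x j))))) :
    stackNorm (fun i => xnext i - P ((n : ℝ)⁻¹ • ∑ j, xnext j)) ≤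
      (R * (1 - γ + γ * σ₂) / (R - δhat) + 8 * M₁ * γ ^ 2 * δhat) *
        stackNorm (fun i => x i - P ((n : ℝ)⁻¹ • ∑ j, x j)) :=
  stmt19_general hn M R P hP Retr Pt M₁ hM₁0 hM₁ W hnn hrow σ₂ hσ₂0 hσ₂1 hσ γ hγ0 hγ1 δhat hδ0 hδR
    hlip hρ₂ x hxM hclose xnext hnext
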